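/- arXiv:2410.00221 — 2 statements merged into one kernel-verified Lean document; each statement's English description precedes it below -/
import Mathlib

section
/- For probability vectors p and q on I objects and any draw size K ≥ 1, the average (1/2)(E[D(p,p)] + E[D(q,q)]) is at most E[D(p,q)], with equality if and only if p = q. -/
open Finset

/-- Expected dissimilarity between two independent unordered draws of size `K`
with replacement from `I` objects, one drawn according to `p`, the other
according to `q`. The dissimilarity between the two draws is
`1 - (1/K²) ∑ i (count X₁ i)(count X₂ i)`. -/
noncomputable def expectedDissim (K I : ℕ) (p q : Fin I → ℝ) : ℝ :=
  ∑ X₁ : Fin K → Fin I, ∑ X₂ : Fin K → Fin I,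
    ((∏ k, p (X₁ k)) * (∏ k, q (X₂ k))) *
      (1 - (1 / (K : ℝ) ^ 2) *
        ∑ i : Fin I, ((Finset.univ.filter fun k => X₁ k = i).card : ℝ) *
          ((Finset.univ.filter fun k => X₂ k = i).card : ℝ))

lemma sum_prod_pi {K I : ℕ} (p : Fin I → ℝ) :
    ∑ X : Fin K → Fin I, ∏ k, p (X k) = (∑ i, p i) ^ K := by
  rw [← Fintype.piFinset_univ, ← Finset.prod_univ_sum]
  simp

lemma sum_prod_count {K I : ℕ} (p : Fin I → ℝ) (hp1 : ∑ i, p i = 1) (i : Fin I) :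
    ∑ X : Fin K → Fin I,
      (∏ k, p (X k)) * ((Finset.univ.filter fun k => X k = i).card : ℝ) = K * p i := by
  have hcard : ∀ X : Fin K → Fin I,
      ((Finset.univ.filter fun k => X k = i).card : ℝ)
        = ∑ k : Fin K, if X k = i then (1:ℝ) else 0 := by
    intro X
    rw [Finset.card_filter]
    push_cast
    simp
  calc ∑ X : Fin K → Fin I,
        (∏ k, p (X k)) * ((Finset.univ.filter fun k => X k = i).card : ℝ)
      = ∑ k : Fin K, ∑ X : Fin K → Fin I,
          ∏ k', (p (X k') * (if k' = k then (if X k' = i then (1:ℝ) else 0) else 1)) := by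
        rw [Finset.sum_comm]
        refine Finset.sum_congr rfl fun X _ => ?_
        rw [hcard, Finset.mul_sum]
        refine Finset.sum_congr rfl fun k _ => ?_
        rw [Finset.prod_mul_distrib, Finset.prod_ite_eq']
        simp
    _ = ∑ k : Fin K, ∏ k' : Fin K,
          ∑ j : Fin I, (p j * (if k' = k then (if j = i then (1:ℝ) else 0) else 1)) := by
        refine Finset.sum_congr rfl fun k _ => ?_
        symm
        rw [Finset.prod_univ_sum, Fintype.piFinset_univ]
    _ = K * p i := by
        have : ∀ k k' : Fin K,
            (∑ j : Fin I, p j * (if k' = k then (if j = i then (1:ℝ) else 0) else 1))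
              = if k' = k then p i else 1 := by
          intro k k'
          by_cases h : k' = k <;> simp [h, hp1, Finset.mul_sum, mul_ite]
        simp only [this]
        simp [Finset.prod_ite_eq', mul_comm]

lemma expectedDissim_eq {K I : ℕ} (hK : 1 ≤ K) (p q : Fin I → ℝ)
    (hp1 : ∑ i, p i = 1) (hq1 : ∑ i, q i = 1) :
    expectedDissim K I p q = 1 - ∑ i, p i * q i := by
  have hK0 : (K : ℝ) ≠ 0 := by positivity
  unfold expectedDissim
  have key : ∑ X₁ : Fin K → Fin I, ∑ X₂ : Fin K → Fin I,
      ((∏ k, p (X₁ k)) * (∏ k, q (X₂ k))) *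
        (∑ i : Fin I, ((Finset.univ.filter fun k => X₁ k = i).card : ℝ) *
          ((Finset.univ.filter fun k => X₂ k = i).card : ℝ))
      = (K:ℝ)^2 * ∑ i, p i * q i := by
    have : ∀ X₁ X₂ : Fin K → Fin I,
        ((∏ k, p (X₁ k)) * (∏ k, q (X₂ k))) *
          (∑ i : Fin I, ((Finset.univ.filter fun k => X₁ k = i).card : ℝ) *
            ((Finset.univ.filter fun k => X₂ k = i).card : ℝ))
        = ∑ i : Fin I, ((∏ k, p (X₁ k)) * ((Finset.univ.filter fun k => X₁ k = i).card : ℝ)) *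
            ((∏ k, q (X₂ k)) * ((Finset.univ.filter fun k => X₂ k = i).card : ℝ)) := by
      intro X₁ X₂
      rw [Finset.mul_sum]
      refine Finset.sum_congr rfl fun i _ => ?_
      ring
    simp only [this]
    rw [show (∑ X₁ : Fin K → Fin I, ∑ X₂ : Fin K → Fin I, ∑ i : Fin I,
        ((∏ k, p (X₁ k)) * ((Finset.univ.filter fun k => X₁ k = i).card : ℝ)) *
          ((∏ k, q (X₂ k)) * ((Finset.univ.filter fun k => X₂ k = i).card : ℝ)))
        = ∑ i : Fin I, ∑ X₁ : Fin K → Fin I, ∑ X₂ : Fin K → Fin I,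
        ((∏ k, p (X₁ k)) * ((Finset.univ.filter fun k => X₁ k = i).card : ℝ)) *
          ((∏ k, q (X₂ k)) * ((Finset.univ.filter fun k => X₂ k = i).card : ℝ)) from
      (Finset.sum_congr rfl fun X₁ _ => Finset.sum_comm).trans Finset.sum_comm]
    rw [Finset.mul_sum]
    refine Finset.sum_congr rfl fun i _ => ?_
    simp_rw [← Finset.mul_sum]
    rw [← Finset.sum_mul, sum_prod_count p hp1 i, sum_prod_count q hq1 i]
    ring
  have hw : ∀ r : Fin I → ℝ, (∑ i, r i = 1) →
      (∑ X : Fin K → Fin I, ∏ k, r (X k)) = 1 := fun r hr => by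
    rw [sum_prod_pi, hr, one_pow]
  calc ∑ X₁ : Fin K → Fin I, ∑ X₂ : Fin K → Fin I,
      ((∏ k, p (X₁ k)) * (∏ k, q (X₂ k))) *
        (1 - (1 / (K : ℝ) ^ 2) *
          ∑ i : Fin I, ((Finset.univ.filter fun k => X₁ k = i).card : ℝ) *
            ((Finset.univ.filter fun k => X₂ k = i).card : ℝ))
      = (∑ X₁ : Fin K → Fin I, ∑ X₂ : Fin K → Fin I,
          (∏ k, p (X₁ k)) * (∏ k, q (X₂ k)))
        - (1 / (K : ℝ) ^ 2) * ∑ X₁ : Fin K → Fin I, ∑ X₂ : Fin K → Fin I,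
          ((∏ k, p (X₁ k)) * (∏ k, q (X₂ k))) *
            (∑ i : Fin I, ((Finset.univ.filter fun k => X₁ k = i).card : ℝ) *
              ((Finset.univ.filter fun k => X₂ k = i).card : ℝ)) := by
        rw [Finset.mul_sum, ← Finset.sum_sub_distrib]
        refine Finset.sum_congr rfl fun X₁ _ => ?_
        rw [Finset.mul_sum, ← Finset.sum_sub_distrib]
        refine Finset.sum_congr rfl fun X₂ _ => ?_
        ring
    _ = 1 - ∑ i, p i * q i := by
        rw [key]
        have h1 : ∑ X₁ : Fin K → Fin I, ∑ X₂ : Fin K → Fin I,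
            (∏ k, p (X₁ k)) * (∏ k, q (X₂ k)) = 1 := by
          simp_rw [← Finset.mul_sum]
          rw [← Finset.sum_mul, hw p hp1, hw q hq1, one_mul]
        rw [h1]
        field_simp

/-- The average `(1/2)(E[D(p,p)] + E[D(q,q)])` is at most `E[D(p,q)]`, with
equality if and only if `p = q`. -/
theorem avg_expectedDissim_le (K I : ℕ) (hK : 1 ≤ K) (hI : 1 ≤ I)
    (p q : Fin I → ℝ) (hp : ∀ i, 0 ≤ p i) (hp1 : ∑ i, p i = 1)
    (hq : ∀ i, 0 ≤ q i) (hq1 : ∑ i, q i = 1) :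
    (1 / 2) * (expectedDissim K I p p + expectedDissim K I q q) ≤ expectedDissim K I p q ∧
    ((1 / 2) * (expectedDissim K I p p + expectedDissim K I q q) = expectedDissim K I p q ↔
      p = q) := by
  rw [expectedDissim_eq hK p q hp1 hq1, expectedDissim_eq hK p p hp1 hp1,
    expectedDissim_eq hK q q hq1 hq1]
  have hsum : ∑ i, (p i - q i)^2
      = ∑ i, p i * p i - 2 * ∑ i, p i * q i + ∑ i, q i * q i := by
    rw [Finset.mul_sum Finset.univ (fun i => p i * q i) 2, ← Finset.sum_sub_distrib,
      ← Finset.sum_add_distrib]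
    exact Finset.sum_congr rfl fun i _ => by ring
  have hnn : 0 ≤ ∑ i, (p i - q i)^2 :=
    Finset.sum_nonneg fun i _ => sq_nonneg _
  have hzero : (∑ i, (p i - q i)^2 = 0) ↔ p = q := by
    rw [Finset.sum_eq_zero_iff_of_nonneg fun i _ => sq_nonneg _]
    constructor
    · intro h
      funext i
      have := h i (Finset.mem_univ i)
      have := pow_eq_zero_iff (n := 2) (by norm_num) |>.mp this
      linarith [this]
    · intro h i _
      rw [h]
      ring
  constructor
  · linarith
  · rw [← hzero]
    constructor
    · intro h; linarith
    · intro h; linarith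
end

section
/- Fix K ≥ 1 and I ≥ 1. The map sending a pair of count vectors (g₁, g₂) to the (K+1)×(K+1) matrix M with M_{ab} = #{i ∈ Fin I : g₁ i = a and g₂ i = b} (indices a, b ranging over 0,…,K) induces a bijection between the set of identity states C^K_I (orbits of pairs of count vectors under the S₂ × S_I action) and the quotient by matrix transposition of the set 𝓜 of (K+1)×(K+1) matrices with nonnegative integer entries M_{ab} (a,b ∈ {0,…,K}) satisfying ∑_{a,b} M_{ab} = I and ∑_{a,b} a·M_{ab} = ∑_{a,b} b·M_{ab} = K. In particular |C^K_I| = |𝓜 / transpose|. -/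
open Finset Matrix

/-- The orbit of an ordered pair of count vectors `(g₁, g₂)` under the action of
`S₂ × S_I`: the `S₂` factor swaps the two count vectors, and a permutation
`σ ∈ S_I` relabels the index set of both count vectors by precomposition
with `σ⁻¹`. -/
def pairOrbit (I : ℕ) (x : (Fin I → ℕ) × (Fin I → ℕ)) :
    Set ((Fin I → ℕ) × (Fin I → ℕ)) :=
  {y | ∃ σ : Equiv.Perm (Fin I),
    y = (x.1 ∘ ⇑σ.symm, x.2 ∘ ⇑σ.symm) ∨ y = (x.2 ∘ ⇑σ.symm, x.1 ∘ ⇑σ.symm)}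

/-- The set of identity states `C^K_I`: the orbits of pairs of count vectors of
size `K` on `Fin I` under the `S₂ × S_I` action. -/
def IdentityStates (K I : ℕ) :=
  {S : Set ((Fin I → ℕ) × (Fin I → ℕ)) //
    ∃ x : (Fin I → ℕ) × (Fin I → ℕ),
      (∑ i, x.1 i = K) ∧ (∑ i, x.2 i = K) ∧ S = pairOrbit I x}

/-- The `(K+1) × (K+1)` matrix associated with a pair of count vectors
`(g₁, g₂)`: entry `(a, b)` counts the indices `i` with `g₁ i = a` and
`g₂ i = b`. -/
def pairToMat (K I : ℕ) (x : (Fin I → ℕ) × (Fin I → ℕ)) :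
    Matrix (Fin (K + 1)) (Fin (K + 1)) ℕ :=
  fun a b => (Finset.univ.filter fun i : Fin I => x.1 i = (a : ℕ) ∧ x.2 i = (b : ℕ)).card

/-- The set `𝓜` of `(K+1) × (K+1)` matrices with nonnegative integer entries
whose entries sum to `I` and whose row- and column-weighted sums equal `K`. -/
def MatSet (K I : ℕ) : Set (Matrix (Fin (K + 1)) (Fin (K + 1)) ℕ) :=
  {M | (∑ a, ∑ b, M a b) = I ∧
    (∑ a : Fin (K + 1), ∑ b : Fin (K + 1), (a : ℕ) * M a b) = K ∧
    (∑ a : Fin (K + 1), ∑ b : Fin (K + 1), (b : ℕ) * M a b) = K}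

/-- The quotient `𝓜 / transpose`: orbits of matrices in `𝓜` under transposition. -/
def MatOrbits (K I : ℕ) :=
  {S : Set (Matrix (Fin (K + 1)) (Fin (K + 1)) ℕ) // ∃ M ∈ MatSet K I, S = {M, Mᵀ}}

/-!
A pair of count vectors of size `K` takes values in `{0, …, K}`, so it is a map
`p : Fin I → Fin (K+1) × Fin (K+1)`, and `pairToMat` is the table of fibre sizes of `p`. Two maps
with the same fibre sizes differ by a permutation of the domain, and every table of fibre sizes
with total `I` is realised by some map; the weighted sums in `MatSet` are then exactly `∑ g₁` and
`∑ g₂`. Swapping the two count vectors transposes the table, so `pairToMat` identifies the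
`S₂ × S_I`-orbits with the transposition orbits.
-/

section Fibers

variable {α β : Type*} [Fintype α] [DecidableEq β]

theorem exists_perm_eq_comp_of_card_fiber_eq {f g : α → β}
    (h : ∀ b, #{a | f a = b} = #{a | g a = b}) : ∃ σ : Equiv.Perm α, f = g ∘ σ := by
  let e b : {a // f a = b} ≃ {a // g a = b} :=
    Fintype.equivOfCardEq (by simpa only [Fintype.card_subtype] using h b)
  exact ⟨(Equiv.sigmaFiberEquiv f).symm.trans
      ((Equiv.sigmaCongrRight e).trans (Equiv.sigmaFiberEquiv g)),
    funext fun a => (e (f a) ⟨a, rfl⟩).prop.symm⟩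

theorem exists_card_fiber_eq [Fintype β] (m : β → ℕ) (h : ∑ b, m b = Fintype.card α) :
    ∃ p : α → β, ∀ b, #{a | p a = b} = m b := by
  let e : α ≃ Σ b, Fin (m b) := Fintype.equivOfCardEq (by simp [h])
  refine ⟨fun a => (e a).1, fun b => ?_⟩
  rw [← Fintype.card_subtype, Fintype.card_congr
    ((e.subtypeEquiv fun _ => Iff.rfl).trans (Equiv.sigmaSubtype b)), Fintype.card_fin]

end Fibers

section CountVectors

variable {K I : ℕ}

theorem apply_le_of_sum_eq {x : Fin I → ℕ} (h : ∑ i, x i = K) (i : Fin I) : x i ≤ K :=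
  h ▸ single_le_sum (fun j _ => Nat.zero_le (x j)) (mem_univ i)

/-- Pairs of count vectors with entries at most `K` are exactly those of this form, and for them
`pairToMat` is the table of fibre sizes of `p`. -/
def ofFinPairs (p : Fin I → Fin (K + 1) × Fin (K + 1)) : (Fin I → ℕ) × (Fin I → ℕ) :=
  (fun i => (p i).1, fun i => (p i).2)

theorem exists_ofFinPairs_eq {x : (Fin I → ℕ) × (Fin I → ℕ)} (h₁ : ∀ i, x.1 i ≤ K)
    (h₂ : ∀ i, x.2 i ≤ K) : ∃ p : Fin I → Fin (K + 1) × Fin (K + 1), ofFinPairs p = x :=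
  ⟨fun i => (⟨x.1 i, Nat.lt_succ_of_le (h₁ i)⟩, ⟨x.2 i, Nat.lt_succ_of_le (h₂ i)⟩), rfl⟩

theorem pairToMat_ofFinPairs (p : Fin I → Fin (K + 1) × Fin (K + 1)) (a b : Fin (K + 1)) :
    pairToMat K I (ofFinPairs p) a b = #{i | p i = (a, b)} := by
  simp only [pairToMat, ofFinPairs, Fin.val_inj, Prod.ext_iff]

theorem sum_mul_pairToMat_ofFinPairs (p : Fin I → Fin (K + 1) × Fin (K + 1))
    (f : Fin (K + 1) → Fin (K + 1) → ℕ) :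
    ∑ a, ∑ b, f a b * pairToMat K I (ofFinPairs p) a b = ∑ i, f (p i).1 (p i).2 := by
  simp_rw [pairToMat_ofFinPairs, ← Fintype.sum_prod_type' (fun a b => f a b * #{i | p i = (a, b)}),
    ← sum_fiberwise' univ p fun v => f v.1 v.2, sum_const, smul_eq_mul, mul_comm]

theorem pairToMat_ofFinPairs_mem_matSet_iff (p : Fin I → Fin (K + 1) × Fin (K + 1)) :
    pairToMat K I (ofFinPairs p) ∈ MatSet K I ↔
      ∑ i, ((p i).1 : ℕ) = K ∧ ∑ i, ((p i).2 : ℕ) = K := by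
  have hcard := sum_mul_pairToMat_ofFinPairs p fun _ _ => 1
  have hrow := sum_mul_pairToMat_ofFinPairs p fun a _ => a
  have hcol := sum_mul_pairToMat_ofFinPairs p fun _ b => b
  simp_all [MatSet]

theorem pairToMat_mem_matSet {x : (Fin I → ℕ) × (Fin I → ℕ)} (h₁ : ∑ i, x.1 i = K)
    (h₂ : ∑ i, x.2 i = K) : pairToMat K I x ∈ MatSet K I := by
  obtain ⟨p, rfl⟩ := exists_ofFinPairs_eq (apply_le_of_sum_eq h₁) (apply_le_of_sum_eq h₂)
  exact (pairToMat_ofFinPairs_mem_matSet_iff p).2 ⟨h₁, h₂⟩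

theorem pairToMat_comp_perm (x : (Fin I → ℕ) × (Fin I → ℕ)) (σ : Equiv.Perm (Fin I)) :
    pairToMat K I (x.1 ∘ σ.symm, x.2 ∘ σ.symm) = pairToMat K I x := by
  ext a b
  exact card_equiv σ.symm (by simp)

theorem pairToMat_swap (x : (Fin I → ℕ) × (Fin I → ℕ)) :
    pairToMat K I x.swap = (pairToMat K I x)ᵀ := by
  ext a b
  simp only [pairToMat, Prod.fst_swap, Prod.snd_swap, transpose_apply, and_comm]

theorem exists_perm_of_pairToMat_ofFinPairs_eq {p q : Fin I → Fin (K + 1) × Fin (K + 1)}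
    (h : pairToMat K I (ofFinPairs q) = pairToMat K I (ofFinPairs p)) :
    ∃ σ : Equiv.Perm (Fin I), q = p ∘ σ :=
  exists_perm_eq_comp_of_card_fiber_eq fun v => by
    simpa only [pairToMat_ofFinPairs] using congrFun (congrFun h v.1) v.2

end CountVectors

section Orbits

variable {K I : ℕ}

theorem mem_pairOrbit_self (x : (Fin I → ℕ) × (Fin I → ℕ)) : x ∈ pairOrbit I x :=
  ⟨1, Or.inl rfl⟩

theorem swap_mem_pairOrbit (x : (Fin I → ℕ) × (Fin I → ℕ)) : x.swap ∈ pairOrbit I x :=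
  ⟨1, Or.inr rfl⟩

theorem mem_pairOrbit_symm {x y : (Fin I → ℕ) × (Fin I → ℕ)} (h : y ∈ pairOrbit I x) :
    x ∈ pairOrbit I y := by
  obtain ⟨σ, rfl | rfl⟩ := h
  · exact ⟨σ⁻¹, Or.inl (by ext <;> simp [Equiv.Perm.inv_def])⟩
  · exact ⟨σ⁻¹, Or.inr (by ext <;> simp [Equiv.Perm.inv_def])⟩

theorem mem_pairOrbit_trans {x y z : (Fin I → ℕ) × (Fin I → ℕ)} (hy : y ∈ pairOrbit I x)
    (hz : z ∈ pairOrbit I y) : z ∈ pairOrbit I x := by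
  obtain ⟨σ, rfl | rfl⟩ := hy <;> obtain ⟨τ, rfl | rfl⟩ := hz
  · exact ⟨τ * σ, Or.inl (by ext <;> simp [Equiv.Perm.mul_def])⟩
  · exact ⟨τ * σ, Or.inr (by ext <;> simp [Equiv.Perm.mul_def])⟩
  · exact ⟨τ * σ, Or.inr (by ext <;> simp [Equiv.Perm.mul_def])⟩
  · exact ⟨τ * σ, Or.inl (by ext <;> simp [Equiv.Perm.mul_def])⟩

theorem pairOrbit_eq_of_mem {x y : (Fin I → ℕ) × (Fin I → ℕ)} (h : y ∈ pairOrbit I x) :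
    pairOrbit I y = pairOrbit I x :=
  Set.ext fun _ => ⟨mem_pairOrbit_trans h, mem_pairOrbit_trans (mem_pairOrbit_symm h)⟩

theorem pairToMat_image_pairOrbit (x : (Fin I → ℕ) × (Fin I → ℕ)) :
    pairToMat K I '' pairOrbit I x = {pairToMat K I x, (pairToMat K I x)ᵀ} := by
  refine Set.Subset.antisymm ?_ (Set.pair_subset_iff.2
    ⟨⟨x, mem_pairOrbit_self x, rfl⟩, ⟨x.swap, swap_mem_pairOrbit x, pairToMat_swap x⟩⟩)
  rintro _ ⟨_, ⟨σ, rfl | rfl⟩, rfl⟩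
  · exact Or.inl (pairToMat_comp_perm x σ)
  · exact Or.inr ((pairToMat_comp_perm x.swap σ).trans (pairToMat_swap x))

theorem ofFinPairs_mem_pairOrbit_of_pairToMat_mem {p q : Fin I → Fin (K + 1) × Fin (K + 1)}
    (h : pairToMat K I (ofFinPairs q) ∈
      ({pairToMat K I (ofFinPairs p), (pairToMat K I (ofFinPairs p))ᵀ} : Set _)) :
    ofFinPairs q ∈ pairOrbit I (ofFinPairs p) := by
  rcases h with h | h
  · obtain ⟨σ, rfl⟩ := exists_perm_of_pairToMat_ofFinPairs_eq h
    exact ⟨σ⁻¹, Or.inl rfl⟩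
  · obtain ⟨σ, rfl⟩ := exists_perm_of_pairToMat_ofFinPairs_eq (p := Prod.swap ∘ p)
      (h.trans (pairToMat_swap _).symm)
    exact ⟨σ⁻¹, Or.inr rfl⟩

end Orbits

section Bijection

variable {K I : ℕ}

def identityStatesToMatOrbits (K I : ℕ) (S : IdentityStates K I) : MatOrbits K I :=
  ⟨pairToMat K I '' S.1, by
    obtain ⟨x, h₁, h₂, hS⟩ := S.2
    exact ⟨pairToMat K I x, pairToMat_mem_matSet h₁ h₂, hS ▸ pairToMat_image_pairOrbit x⟩⟩

theorem identityStatesToMatOrbits_mk (x : (Fin I → ℕ) × (Fin I → ℕ)) (h₁ : ∑ i, x.1 i = K)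
    (h₂ : ∑ i, x.2 i = K) :
    (identityStatesToMatOrbits K I ⟨pairOrbit I x, x, h₁, h₂, rfl⟩).1 =
      {pairToMat K I x, (pairToMat K I x)ᵀ} :=
  pairToMat_image_pairOrbit x

theorem identityStatesToMatOrbits_injective :
    Function.Injective (identityStatesToMatOrbits K I) := by
  rintro ⟨_, x, hx₁, hx₂, rfl⟩ ⟨_, y, hy₁, hy₂, rfl⟩ h
  obtain ⟨p, rfl⟩ := exists_ofFinPairs_eq (apply_le_of_sum_eq hx₁) (apply_le_of_sum_eq hx₂)
  obtain ⟨q, rfl⟩ := exists_ofFinPairs_eq (apply_le_of_sum_eq hy₁) (apply_le_of_sum_eq hy₂)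
  have hM := congrArg Subtype.val h
  rw [identityStatesToMatOrbits_mk _ hx₁ hx₂, identityStatesToMatOrbits_mk _ hy₁ hy₂] at hM
  have hq : pairToMat K I (ofFinPairs q) ∈
      ({pairToMat K I (ofFinPairs p), (pairToMat K I (ofFinPairs p))ᵀ} : Set _) :=
    hM ▸ Set.mem_insert _ _
  exact Subtype.ext (pairOrbit_eq_of_mem (ofFinPairs_mem_pairOrbit_of_pairToMat_mem hq)).symm

theorem identityStatesToMatOrbits_surjective :
    Function.Surjective (identityStatesToMatOrbits K I) := by
  rintro ⟨_, M, hM, rfl⟩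
  obtain ⟨p, hp⟩ := exists_card_fiber_eq (α := Fin I) (fun v : Fin (K + 1) × Fin (K + 1) => M v.1 v.2)
    (by rw [Fintype.sum_prod_type, hM.1, Fintype.card_fin])
  have hpM : pairToMat K I (ofFinPairs p) = M := by
    ext a b
    rw [pairToMat_ofFinPairs, hp]
  obtain ⟨h₁, h₂⟩ := (pairToMat_ofFinPairs_mem_matSet_iff p).1 (hpM ▸ hM)
  exact ⟨⟨_, ofFinPairs p, h₁, h₂, rfl⟩,
    Subtype.ext ((identityStatesToMatOrbits_mk _ h₁ h₂).trans (by rw [hpM]))⟩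

end Bijection

theorem identityStates_equiv_matOrbits_general (K I : ℕ) :
    (∃ e : IdentityStates K I ≃ MatOrbits K I,
      ∀ (x : (Fin I → ℕ) × (Fin I → ℕ)) (h₁ : ∑ i, x.1 i = K) (h₂ : ∑ i, x.2 i = K),
        (e ⟨pairOrbit I x, x, h₁, h₂, rfl⟩).1 = {pairToMat K I x, (pairToMat K I x)ᵀ}) ∧
    Nat.card (IdentityStates K I) = Nat.card (MatOrbits K I) := by
  let e := Equiv.ofBijective (identityStatesToMatOrbits K I)
    ⟨identityStatesToMatOrbits_injective, identityStatesToMatOrbits_surjective⟩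
  exact ⟨⟨e, identityStatesToMatOrbits_mk⟩, Nat.card_congr e⟩

/-- The map `(g₁, g₂) ↦ M`, `M_{ab} = #{i : g₁ i = a ∧ g₂ i = b}`, induces a
bijection between the identity states `C^K_I` and `𝓜 / transpose`; in
particular `|C^K_I| = |𝓜 / transpose|`. -/
theorem identityStates_equiv_matOrbits (K I : ℕ) (hK : 1 ≤ K) (hI : 1 ≤ I) :
    (∃ e : IdentityStates K I ≃ MatOrbits K I,
      ∀ (x : (Fin I → ℕ) × (Fin I → ℕ)) (h₁ : ∑ i, x.1 i = K) (h₂ : ∑ i, x.2 i = K),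
        (e ⟨pairOrbit I x, x, h₁, h₂, rfl⟩).1 = {pairToMat K I x, (pairToMat K I x)ᵀ}) ∧
    Nat.card (IdentityStates K I) = Nat.card (MatOrbits K I) :=
  identityStates_equiv_matOrbits_general K I
end
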